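/- arXiv:1609.05261 — 12 statements merged into one kernel-verified Lean document; each statement's English description precedes it below -/
import Mathlib

section
/- A commutative ring R satisfies BLR-1 (i.e., I ∩ J = I·(I→J) for all ideals I, J of R) if and only if R is a multiplication ring (i.e., for all ideals I ⊆ J of R there exists an ideal K of R with I = J·K). -/
/-!
The ideal quotient `J.colon I` is the largest `K` with `I * K ≤ J`, so `I * J.colon I ≤ I ⊓ J`
always holds. In a multiplication ring, writing `I ⊓ J = I * K` forces `K ≤ J.colon I`, giving the
reverse inclusion; conversely, for `I ≤ J`, BLR-1 applied to `J, I` gives `I = J * I.colon J`.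
-/

namespace Ideal

variable {R : Type*} [CommRing R] {I J K : Ideal R}

theorem le_colon_iff_mul_le : K ≤ J.colon I ↔ I * K ≤ J := by
  rw [Submodule.mul_le]
  exact ⟨fun h i hi k hk => mul_comm k i ▸ Submodule.mem_colon.mp (h hk) i hi,
    fun h k hk => Submodule.mem_colon.mpr fun i hi => by
      simpa only [smul_eq_mul, mul_comm] using h i hi k hk⟩

theorem mul_colon_le_inf : I * J.colon I ≤ I ⊓ J :=
  le_inf mul_le_left (le_colon_iff_mul_le.mp le_rfl)

theorem inf_eq_mul_colon_of_inf_eq_mul (hK : I ⊓ J = I * K) : I ⊓ J = I * J.colon I :=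
  le_antisymm
    (hK ▸ mul_mono_right (le_colon_iff_mul_le.mpr (hK ▸ inf_le_right)))
    mul_colon_le_inf

end Ideal

/-- For ideals `I J` of a commutative ring, `I → J = {x | x • I ⊆ J}` is `J.colon I`.
BLR-1: `I ⊓ J = I * (I → J)` for all ideals. Multiplication ring: for all `I ≤ J`
there is `K` with `I = J * K`. -/
theorem stmt_0 {R : Type*} [CommRing R] :
    (∀ I J : Ideal R, I ⊓ J = I * (J.colon I)) ↔
      (∀ I J : Ideal R, I ≤ J → ∃ K : Ideal R, I = J * K) := by
  constructor
  · intro hBLR I J hIJ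
    exact ⟨I.colon J, by rw [← hBLR J I, inf_eq_right.mpr hIJ]⟩
  · intro hMult I J
    obtain ⟨K, hK⟩ := hMult (I ⊓ J) I inf_le_left
    exact Ideal.inf_eq_mul_colon_of_inf_eq_mul hK
end

section
/- Every discrete valuation ring is a BL-ring, i.e., its ideals satisfy both BLR-1 and BLR-2. -/
/-!
The ideals of a discrete valuation ring are principal and totally ordered, and both axioms hold
for any two comparable ideals `I`, `J` with `I` principal: if `I ≤ J` then `J.colon I = ⊤`,
and if `J ≤ I = (a)` then every `x ∈ J` is `a * y` with `y ∈ J.colon I`.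
-/

namespace Ideal

variable {R : Type*} [CommSemiring R]

theorem mul_colon_le (I J : Ideal R) : I * J.colon I ≤ J :=
  mul_le.mpr fun a ha b hb => mul_comm a b ▸ Submodule.mem_colon.mp hb a ha

theorem le_mul_colon_of_le {I J : Ideal R} [I.IsPrincipal] (h : J ≤ I) : J ≤ I * J.colon I := by
  obtain ⟨a, rfl⟩ := ‹I.IsPrincipal›
  intro x hx
  obtain ⟨y, rfl⟩ := mem_span_singleton'.mp (h hx)
  have hy : y ∈ J.colon (span {a}) := mem_colon_span_singleton.mpr hx
  exact mul_comm a y ▸ mul_mem_mul (mem_span_singleton_self a) hy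

theorem inf_eq_mul_colon_of_le_or_le {I J : Ideal R} [I.IsPrincipal] (h : I ≤ J ∨ J ≤ I) :
    I ⊓ J = I * J.colon I := by
  refine le_antisymm ?_ (le_inf mul_le_left (mul_colon_le I J))
  rcases h with hIJ | hJI
  · rw [(Submodule.colon_eq_top_iff_subset _).mpr hIJ, mul_top]
    exact inf_le_left
  · exact inf_le_right.trans (le_mul_colon_of_le hJI)

theorem colon_add_colon_eq_top_of_le_or_le {I J : Ideal R} (h : I ≤ J ∨ J ≤ I) :
    J.colon I + I.colon J = ⊤ := by
  rcases h with hIJ | hJI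
  · simp [(Submodule.colon_eq_top_iff_subset _).mpr hIJ]
  · simp [(Submodule.colon_eq_top_iff_subset _).mpr hJI]

end Ideal

/-- Every discrete valuation ring is a BL-ring: its ideals satisfy
BLR-1 (`I ⊓ J = I * (I → J)`, where `I → J = J.colon I`) and
BLR-2 (`(I → J) + (J → I) = R`). -/
theorem stmt_1 {R : Type*} [CommRing R] [IsDomain R] [IsDiscreteValuationRing R] :
    (∀ I J : Ideal R, I ⊓ J = I * (J.colon I)) ∧
      (∀ I J : Ideal R, J.colon I + I.colon J = ⊤) :=
  ⟨fun I J => Ideal.inf_eq_mul_colon_of_le_or_le (total_of (· ≤ ·) I J),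
    fun I J => Ideal.colon_add_colon_eq_top_of_le_or_le (total_of (· ≤ ·) I J)⟩
end

section
/- Every BL-ring R is a subdirect product of subdirectly irreducible BL-rings: there exists a family of ideals (I_t) of R with ⋂_t I_t = 0 such that each quotient ring R/I_t is a subdirectly irreducible ring that satisfies BLR-1 and BLR-2. -/
/-- BLR-1 for a commutative ring: `I ⊓ J = I * (I → J)` where `I → J = J.colon I`. -/
def IsBLR1 (S : Type*) [CommRing S] : Prop :=
  ∀ I J : Ideal S, I ⊓ J = I * (J.colon I)

/-- BLR-2 for a commutative ring: `(I → J) + (J → I) = S`. -/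
def IsBLR2 (S : Type*) [CommRing S] : Prop :=
  ∀ I J : Ideal S, J.colon I + I.colon J = ⊤

/-- A commutative ring is subdirectly irreducible if it has a smallest nonzero ideal. -/
def IsSubdirectlyIrreducibleRing (S : Type*) [CommRing S] : Prop :=
  ∃ M : Ideal S, M ≠ ⊥ ∧ ∀ N : Ideal S, N ≠ ⊥ → M ≤ N

section Aux

variable {R S : Type*} [CommRing R] [CommRing S] (f : R →+* S)

theorem aux_map_colon (hf : Function.Surjective f) {A B : Ideal R} (hA : RingHom.ker f ≤ A) (hB : RingHom.ker f ≤ B) :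
    Ideal.map f (B.colon A) = (Ideal.map f B).colon (Ideal.map f A) := by
  apply le_antisymm
  · intro y hy
    obtain ⟨x, hx, rfl⟩ := (Ideal.mem_map_iff_of_surjective f hf).mp hy
    rw [Submodule.mem_colon]
    intro p hp
    obtain ⟨q, hq, rfl⟩ := (Ideal.mem_map_iff_of_surjective f hf).mp hp
    rw [smul_eq_mul, ← map_mul]
    exact Ideal.mem_map_of_mem f (Submodule.mem_colon.mp hx q hq)
  · intro y hy
    obtain ⟨x, rfl⟩ := hf y
    refine Ideal.mem_map_of_mem f ?_
    rw [Submodule.mem_colon]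
    intro a ha
    have h1 : f (x * a) ∈ Ideal.map f B := by
      rw [map_mul]
      exact Submodule.mem_colon.mp hy (f a) (Ideal.mem_map_of_mem f ha)
    have h2 : x * a ∈ Ideal.comap f (Ideal.map f B) := h1
    rw [Ideal.comap_map_of_surjective f hf] at h2
    have hk : Ideal.comap f (⊥ : Ideal S) ≤ B := fun z hz => hB hz
    rw [smul_eq_mul]
    exact sup_le le_rfl hk h2

theorem aux_map_inf (hf : Function.Surjective f) {A B : Ideal R} (hB : RingHom.ker f ≤ B) :
    Ideal.map f (A ⊓ B) = Ideal.map f A ⊓ Ideal.map f B := by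
  apply le_antisymm (le_inf (Ideal.map_mono inf_le_left) (Ideal.map_mono inf_le_right))
  rintro y ⟨hyA, hyB⟩
  obtain ⟨a, ha, rfl⟩ := (Ideal.mem_map_iff_of_surjective f hf).mp hyA
  obtain ⟨b, hb, hba⟩ := (Ideal.mem_map_iff_of_surjective f hf).mp hyB
  have hab : a - b ∈ RingHom.ker f := by
    rw [RingHom.mem_ker, map_sub, hba, sub_self]
  have haB : a ∈ B := by
    have := B.add_mem hb (hB hab)
    simpa using this
  exact Ideal.mem_map_of_mem f ⟨ha, haB⟩

theorem aux_quot_BLR1 (h1 : IsBLR1 R) (I : Ideal R) : IsBLR1 (R ⧸ I) := by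
  intro I' J'
  set f := Ideal.Quotient.mk I
  have hf : Function.Surjective f := Ideal.Quotient.mk_surjective
  have hker : RingHom.ker f = I := Ideal.mk_ker
  have hI' : I' = Ideal.map f (Ideal.comap f I') := (Ideal.map_comap_of_surjective f hf I').symm
  have hJ' : J' = Ideal.map f (Ideal.comap f J') := (Ideal.map_comap_of_surjective f hf J').symm
  have hkA : RingHom.ker f ≤ Ideal.comap f I' := Ideal.ker_le_comap f
  have hkB : RingHom.ker f ≤ Ideal.comap f J' := Ideal.ker_le_comap f
  rw [hI', hJ', ← aux_map_colon f hf hkA hkB, ← Ideal.map_mul, ← aux_map_inf f hf hkB,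
    ← h1 (Ideal.comap f I') (Ideal.comap f J')]

theorem aux_quot_BLR2 (h2 : IsBLR2 R) (I : Ideal R) : IsBLR2 (R ⧸ I) := by
  intro I' J'
  set f := Ideal.Quotient.mk I
  have hf : Function.Surjective f := Ideal.Quotient.mk_surjective
  have hI' : I' = Ideal.map f (Ideal.comap f I') := (Ideal.map_comap_of_surjective f hf I').symm
  have hJ' : J' = Ideal.map f (Ideal.comap f J') := (Ideal.map_comap_of_surjective f hf J').symm
  have hkA : RingHom.ker f ≤ Ideal.comap f I' := Ideal.ker_le_comap f
  have hkB : RingHom.ker f ≤ Ideal.comap f J' := Ideal.ker_le_comap f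
  rw [hI', hJ', ← aux_map_colon f hf hkA hkB, ← aux_map_colon f hf hkB hkA, Submodule.add_eq_sup, ← Ideal.map_sup, ← Submodule.add_eq_sup,
    h2 (Ideal.comap f I') (Ideal.comap f J'), Ideal.map_top]

/-- Zorn: for `a ≠ 0` there is an ideal maximal among those not containing `a`. -/
theorem aux_exists_maximal_not_mem {a : R} (ha : a ≠ 0) :
    ∃ J : Ideal R, a ∉ J ∧ ∀ K : Ideal R, J ≤ K → a ∉ K → K = J := by
  have hch : ∀ c ⊆ {J : Ideal R | a ∉ J}, IsChain (· ≤ ·) c →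
      ∃ ub ∈ {J : Ideal R | a ∉ J}, ∀ z ∈ c, z ≤ ub := by
    intro c hcs hc
    rcases c.eq_empty_or_nonempty with rfl | hne
    · exact ⟨⊥, by simpa using ha, by simp⟩
    · refine ⟨sSup c, ?_, fun z hz => le_sSup hz⟩
      intro hmem
      obtain ⟨p, hp, hap⟩ := (Submodule.mem_sSup_of_directed hne hc.directedOn).mp hmem
      exact hcs hp hap
  obtain ⟨J, hJ, hmax⟩ := zorn_le₀ {J : Ideal R | a ∉ J} hch
  exact ⟨J, hJ, fun K hJK hK => le_antisymm (hmax hK hJK) hJK⟩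

theorem aux_subdirect_irred {a : R} (ha : a ≠ 0) {J : Ideal R} (hJ : a ∉ J)
    (hmax : ∀ K : Ideal R, J ≤ K → a ∉ K → K = J) :
    IsSubdirectlyIrreducibleRing (R ⧸ J) := by
  set f := Ideal.Quotient.mk J
  have hf : Function.Surjective f := Ideal.Quotient.mk_surjective
  refine ⟨Ideal.span {f a}, ?_, ?_⟩
  · intro h
    have : f a = 0 := by
      have := Ideal.mem_span_singleton_self (f a)
      rw [h] at this
      simpa using this
    exact hJ ((Ideal.Quotient.eq_zero_iff_mem).mp this)
  · intro N hN
    rw [Ideal.span_le, Set.singleton_subset_iff]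
    -- show `f a ∈ N`
    by_contra hfa
    have hcom : a ∉ Ideal.comap f N := hfa
    have hle : J ≤ Ideal.comap f N := by
      intro x hx
      have : f x = 0 := Ideal.Quotient.eq_zero_iff_mem.mpr hx
      show f x ∈ N
      rw [this]; exact N.zero_mem
    have := hmax (Ideal.comap f N) hle hcom
    apply hN
    have hNmap : N = Ideal.map f (Ideal.comap f N) := (Ideal.map_comap_of_surjective f hf N).symm
    rw [hNmap, this]
    apply le_bot_iff.mp
    intro y hy
    obtain ⟨x, hx, rfl⟩ := (Ideal.mem_map_iff_of_surjective f hf).mp hy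
    simpa using Ideal.Quotient.eq_zero_iff_mem.mpr hx

end Aux

/-- Every BL-ring is a subdirect product of subdirectly irreducible BL-rings:
there is a family of ideals with zero intersection such that each quotient is a
subdirectly irreducible ring satisfying BLR-1 and BLR-2. -/
theorem stmt_5 {R : Type u} [CommRing R] (h1 : IsBLR1 R) (h2 : IsBLR2 R) :
    ∃ (T : Type u) (I : T → Ideal R),
      (⨅ t, I t) = ⊥ ∧
        ∀ t, IsSubdirectlyIrreducibleRing (R ⧸ I t) ∧
          IsBLR1 (R ⧸ I t) ∧ IsBLR2 (R ⧸ I t) := by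
  classical
  refine ⟨{a : R // a ≠ 0}, fun t =>
    Classical.choose (aux_exists_maximal_not_mem t.2), ?_, ?_⟩
  · apply le_bot_iff.mp
    intro x hx
    by_contra hx0
    have hmem := (Submodule.mem_iInf _).mp hx ⟨x, hx0⟩
    exact (Classical.choose_spec (aux_exists_maximal_not_mem hx0)).1 hmem
  · intro t
    obtain ⟨hJ, hmax⟩ := Classical.choose_spec (aux_exists_maximal_not_mem t.2)
    exact ⟨aux_subdirect_irred t.2 hJ hmax, aux_quot_BLR1 h1 _, aux_quot_BLR2 h2 _⟩
end

section
/- If R and S are BL-rings, then the direct product ring R × S is a BL-ring; that is, if the ideals of R and of S satisfy BLR-1 and BLR-2, then so do the ideals of R × S. -/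
section aux

variable {R S : Type*} [CommRing R] [CommRing S]

lemma prod_inf_aux (I I' : Ideal R) (J J' : Ideal S) :
    Ideal.prod I J ⊓ Ideal.prod I' J' = Ideal.prod (I ⊓ I') (J ⊓ J') := by
  ext ⟨r, s⟩
  simp [Ideal.mem_prod]
  tauto

lemma prod_sup_aux (I I' : Ideal R) (J J' : Ideal S) :
    Ideal.prod I J ⊔ Ideal.prod I' J' = Ideal.prod (I ⊔ I') (J ⊔ J') := by
  ext ⟨r, s⟩
  constructor
  · intro h
    rcases Submodule.mem_sup.mp h with ⟨⟨a, b⟩, ha, ⟨c, d⟩, hc, hsum⟩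
    rw [Prod.mk_add_mk] at hsum
    obtain ⟨h1, h2⟩ := Prod.mk.injEq .. ▸ hsum
    cases hsum
    exact ⟨Submodule.mem_sup.mpr ⟨a, ha.1, c, hc.1, rfl⟩,
      Submodule.mem_sup.mpr ⟨b, ha.2, d, hc.2, rfl⟩⟩
  · rintro ⟨hr, hs⟩
    rcases Submodule.mem_sup.mp hr with ⟨a, ha, c, hc, rfl⟩
    rcases Submodule.mem_sup.mp hs with ⟨b, hb, d, hd, rfl⟩
    exact Submodule.mem_sup.mpr ⟨(a, b), ⟨ha, hb⟩, (c, d), ⟨hc, hd⟩, rfl⟩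

lemma prod_mul_aux (I I' : Ideal R) (J J' : Ideal S) :
    Ideal.prod I J * Ideal.prod I' J' = Ideal.prod (I * I') (J * J') := by
  apply le_antisymm
  · refine Ideal.mul_le.mpr ?_
    rintro ⟨a, b⟩ ⟨ha, hb⟩ ⟨c, d⟩ ⟨hc, hd⟩
    exact ⟨Ideal.mul_mem_mul ha hc, Ideal.mul_mem_mul hb hd⟩
  · rintro ⟨r, s⟩ ⟨hr, hs⟩
    have h1 : ((r, 0) : R × S) ∈ Ideal.prod I J * Ideal.prod I' J' := by
      refine Submodule.mul_induction_on
        (C := fun x => ((x, (0:S)) : R × S) ∈ Ideal.prod I J * Ideal.prod I' J') hr ?_ ?_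
      · intro a ha c hc
        have := Ideal.mul_mem_mul (I := Ideal.prod I J) (J := Ideal.prod I' J')
          (show ((a, 0) : R × S) ∈ Ideal.prod I J from ⟨ha, J.zero_mem⟩)
          (show ((c, 0) : R × S) ∈ Ideal.prod I' J' from ⟨hc, J'.zero_mem⟩)
        simpa using this
      · intro x y hx hy
        have := Ideal.add_mem _ hx hy
        simpa using this
    have h2 : ((0, s) : R × S) ∈ Ideal.prod I J * Ideal.prod I' J' := by
      refine Submodule.mul_induction_on
        (C := fun x => (((0:R), x) : R × S) ∈ Ideal.prod I J * Ideal.prod I' J') hs ?_ ?_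
      · intro a ha c hc
        have := Ideal.mul_mem_mul (I := Ideal.prod I J) (J := Ideal.prod I' J')
          (show ((0, a) : R × S) ∈ Ideal.prod I J from ⟨I.zero_mem, ha⟩)
          (show ((0, c) : R × S) ∈ Ideal.prod I' J' from ⟨I'.zero_mem, hc⟩)
        simpa using this
      · intro x y hx hy
        have := Ideal.add_mem _ hx hy
        simpa using this
    have := Ideal.add_mem _ h1 h2
    simpa using this

lemma prod_colon_aux (I I' : Ideal R) (J J' : Ideal S) :
    (Ideal.prod I J).colon (Ideal.prod I' J') =
      Ideal.prod (I.colon I') (J.colon J') := by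
  ext ⟨r, s⟩
  simp only [Ideal.mem_prod, Submodule.mem_colon]
  constructor
  · intro h
    constructor
    · intro p hp
      exact (h ((p, 0) : R × S) ⟨hp, J'.zero_mem⟩).1
    · intro p hp
      exact (h ((0, p) : R × S) ⟨I'.zero_mem, hp⟩).2
  · rintro ⟨h1, h2⟩ ⟨p, q⟩ ⟨hp, hq⟩
    exact ⟨h1 p hp, h2 q hq⟩

end aux

/-- If `R` and `S` are BL-rings, so is `R × S`. -/
theorem stmt_8 {R S : Type*} [CommRing R] [CommRing S]
    (hR1 : IsBLR1 R) (hR2 : IsBLR2 R) (hS1 : IsBLR1 S) (hS2 : IsBLR2 S) :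
    IsBLR1 (R × S) ∧ IsBLR2 (R × S) := by
  constructor
  · intro K L
    rw [Ideal.ideal_prod_eq K, Ideal.ideal_prod_eq L]
    rw [prod_inf_aux, prod_colon_aux, prod_mul_aux, ← hR1, ← hS1]
  · intro K L
    rw [Ideal.ideal_prod_eq K, Ideal.ideal_prod_eq L]
    rw [prod_colon_aux, prod_colon_aux]
    show _ ⊔ _ = _
    rw [prod_sup_aux, ← Submodule.add_eq_sup, ← Submodule.add_eq_sup, hR2, hS2,
      Ideal.prod_top_top]
end

section
/- Every homomorphic image of a BL-ring is a BL-ring: if R is a BL-ring and I is an ideal of R, then the quotient ring R/I is a BL-ring. -/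
/-- Colon commutes with comap along the quotient map. -/
lemma comap_colon_aux {R : Type*} [CommRing R] (I : Ideal R) (A B : Ideal (R ⧸ I)) :
    Ideal.comap (Ideal.Quotient.mk I) (B.colon A) =
      (Ideal.comap (Ideal.Quotient.mk I) B).colon (Ideal.comap (Ideal.Quotient.mk I) A) := by
  ext x
  simp only [Ideal.mem_comap, Submodule.mem_colon]
  constructor
  · intro h p hp
    have := h (Ideal.Quotient.mk I p) hp
    simpa [Ideal.mem_comap] using this
  · intro h p hp
    obtain ⟨q, rfl⟩ := Ideal.Quotient.mk_surjective p
    have := h q hp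
    simpa [Ideal.mem_comap, smul_eq_mul] using this

/-- Every homomorphic image of a BL-ring is a BL-ring: if `R` is a BL-ring and
`I` is an ideal of `R`, then `R/I` is a BL-ring. -/
theorem stmt_9 {R : Type*} [CommRing R] (h1 : IsBLR1 R) (h2 : IsBLR2 R) (I : Ideal R) :
    IsBLR1 (R ⧸ I) ∧ IsBLR2 (R ⧸ I) := by
  have hsurj : Function.Surjective (Ideal.Quotient.mk I) := Ideal.Quotient.mk_surjective
  have hmc : ∀ A : Ideal (R ⧸ I),
      Ideal.map (Ideal.Quotient.mk I) (Ideal.comap (Ideal.Quotient.mk I) A) = A :=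
    fun A => Ideal.map_comap_of_surjective _ hsurj A
  constructor
  · intro A B
    set A' := Ideal.comap (Ideal.Quotient.mk I) A
    set B' := Ideal.comap (Ideal.Quotient.mk I) B
    have h := h1 A' B'
    calc A ⊓ B = Ideal.map (Ideal.Quotient.mk I) (A' ⊓ B') := by
          rw [← Ideal.comap_inf, hmc]
      _ = Ideal.map (Ideal.Quotient.mk I) (A' * (B'.colon A')) := by rw [h]
      _ = A * (B.colon A) := by
          rw [Ideal.map_mul, hmc, ← comap_colon_aux, hmc]
  · intro A B
    set A' := Ideal.comap (Ideal.Quotient.mk I) A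
    set B' := Ideal.comap (Ideal.Quotient.mk I) B
    have h := h2 A' B'
    calc B.colon A + A.colon B
        = Ideal.map (Ideal.Quotient.mk I) (B'.colon A' + A'.colon B') := by
          rw [Submodule.add_eq_sup, Submodule.add_eq_sup, Ideal.map_sup, ← comap_colon_aux, ← comap_colon_aux, hmc, hmc]
      _ = ⊤ := by rw [h, Ideal.map_top]
end

section
/- A reduced commutative ring R with identity satisfies BLR-3 if and only if R is a Baer ring, i.e., for every ideal I of R there exists an idempotent e ∈ R such that the annihilator I* equals the principal ideal eR. -/
/-- A reduced commutative ring with identity satisfies BLR-3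
(`I ⊓ J = 0 → I* + J* = R`, where `I*` is the annihilator of `I`) iff it is a
Baer ring (every annihilator ideal is generated by an idempotent). -/
theorem stmt_10 {R : Type*} [CommRing R] [IsReduced R] :
    (∀ I J : Ideal R, I ⊓ J = ⊥ → I.annihilator + J.annihilator = ⊤) ↔
      ∀ I : Ideal R, ∃ e : R, IsIdempotentElem e ∧ I.annihilator = Ideal.span {e} := by
  constructor
  · intro h I
    have hdisj : I ⊓ I.annihilator = ⊥ := by
      rw [eq_bot_iff]
      intro x hx
      have hx1 : x ∈ I := hx.1
      have hx2 : x ∈ I.annihilator := hx.2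
      have : x * x = 0 := Submodule.mem_annihilator.mp hx2 x hx1
      have : x = 0 := IsReduced.eq_zero x ⟨2, by rw [pow_two]; exact this⟩
      simpa using this
    have htop := h I I.annihilator hdisj
    have h1 : (1 : R) ∈ I.annihilator + I.annihilator.annihilator := by
      rw [htop]; trivial
    obtain ⟨a, ha, b, hb, hab⟩ := Submodule.mem_sup.mp h1
    have hba : b * a = 0 := Submodule.mem_annihilator.mp hb a ha
    have hae : a * a = a := by
      have : a * (a + b) = a := by rw [hab, mul_one]
      calc a * a = a * (a + b) - a * b := by ring
        _ = a - a * b := by rw [this]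
        _ = a := by rw [mul_comm, hba, sub_zero]
    refine ⟨a, hae, le_antisymm ?_ ?_⟩
    · intro x hx
      have hbx : b * x = 0 := Submodule.mem_annihilator.mp hb x hx
      have : x = a * x := by
        calc x = (a + b) * x := by rw [hab, one_mul]
          _ = a * x + b * x := by ring
          _ = a * x := by rw [hbx, add_zero]
      rw [this]
      exact Ideal.mul_mem_right x _ (Ideal.mem_span_singleton_self a)
    · rw [Ideal.span_le, Set.singleton_subset_iff]
      exact ha
  · intro h I J hIJ
    obtain ⟨e, he, hspan⟩ := h I
    have hJ : J ≤ I.annihilator := by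
      intro x hx
      rw [Submodule.mem_annihilator]
      intro y hy
      have : x * y ∈ I ⊓ J := ⟨Ideal.mul_mem_left _ _ hy, by
        simpa [smul_eq_mul] using Ideal.mul_mem_right _ _ hx⟩
      rw [hIJ] at this
      simpa using this
    rw [eq_top_iff]
    intro x _
    have h1 : (1 : R) = e + (1 - e) := by ring
    have hem : e ∈ I.annihilator := by
      rw [hspan]; exact Ideal.mem_span_singleton_self e
    have h1e : (1 - e) ∈ J.annihilator := by
      rw [Submodule.mem_annihilator]
      intro n hn
      have hnI : n ∈ Ideal.span {e} := hspan ▸ hJ hn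
      obtain ⟨c, hc⟩ := Ideal.mem_span_singleton'.mp hnI
      have : (1 - e) * n = c * (e - e * e) := by rw [← hc]; ring
      rw [smul_eq_mul, this, he, sub_self, mul_zero]
    have : x = x * 1 := by ring
    rw [this, h1]
    have : x * (e + (1 - e)) = x * e + x * (1 - e) := by ring
    rw [this]
    exact Submodule.add_mem_sup (Ideal.mul_mem_left _ _ hem) (Ideal.mul_mem_left _ _ h1e)
end

section
/- Let R be a subdirectly irreducible BL-ring. Then the annihilator ideals of R are linearly ordered by inclusion, and there are only finitely many annihilator ideals of R. -/
/-!
Let `M` be the smallest nonzero ideal. If neither of `I*`, `J*` contains the other, then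
`I* J` and `J* I` are nonzero, so both contain `M`. But `(J → I) (I* J) ⊆ I* I = 0` and
`(I → J) (J* I) ⊆ J* J = 0`, so BLR-2 gives `M = ((I → J) + (J → I)) M = 0`.

For finiteness, `T = M*` is a maximal ideal (`M` is a simple module), and BLR-1 says that
every ideal below an ideal `P` is `P` times an ideal. Hence no ideal lies strictly between
`P T` and `P`, and `T Q ≠ Q` for every `Q ≠ 0`, since otherwise
`M = Q (Q → M) = T Q (Q → M) = T M = 0`. So `T` is nilpotent: otherwise its powers strictly
decrease, the gaps between them give `T → Q ⊆ Q` for `Q = ⋂ T^n ⊇ M`, and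
`Q = T (T → Q) ⊆ T Q`. Finally `I* ⊆ T` and `I* = T (T → I*) = T (T I)*` for `I ≠ 0`, so
going down from `T^n = 0` every annihilator ideal is a power of `T`.
-/

open Submodule

namespace Ideal

variable {R : Type*} [CommRing R]

theorem le_colon_iff_mul_le_s14 {K T A : Ideal R} : K ≤ A.colon (T : Set R) ↔ K * T ≤ A := by
  rw [mul_le]
  simp only [SetLike.le_def, mem_colon, smul_eq_mul, SetLike.mem_coe]

theorem colon_mul_le (A T : Ideal R) : A.colon (T : Set R) * T ≤ A :=
  le_colon_iff_mul_le_s14.mp le_rfl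

theorem le_annihilator_iff_mul_eq_bot {K I : Ideal R} : K ≤ I.annihilator ↔ K * I = ⊥ :=
  le_annihilator_iff

theorem annihilator_colon (I T : Ideal R) :
    I.annihilator.colon (T : Set R) = (T * I).annihilator :=
  eq_of_forall_le_iff fun K => by
    rw [le_colon_iff_mul_le_s14, le_annihilator_iff_mul_eq_bot, le_annihilator_iff_mul_eq_bot,
      mul_assoc]

theorem isMaximal_annihilator_of_isAtom {M : Ideal R} (hM : IsAtom M) :
    M.annihilator.IsMaximal :=
  have : IsSimpleModule R M := isSimpleModule_iff_isAtom.mpr hM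
  IsSimpleModule.annihilator_isMaximal

theorem colon_mul_annihilator_mul_eq_bot (I J : Ideal R) :
    J.colon (I : Set R) * (J.annihilator * I) = ⊥ := by
  rw [mul_left_comm, eq_bot_iff, ← annihilator_mul J]
  exact mul_mono_right (colon_mul_le J I)

theorem annihilator_mul_inf_annihilator_mul_eq_bot
    (h2 : ∀ I J : Ideal R, J.colon I + I.colon J = ⊤) (I J : Ideal R) :
    I.annihilator * J ⊓ J.annihilator * I = ⊥ := by
  set K := I.annihilator * J ⊓ J.annihilator * I
  refine eq_bot_iff.mpr ?_
  calc K = J.colon (I : Set R) * K + I.colon (J : Set R) * K := by rw [← add_mul, h2, top_mul]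
    _ ≤ J.colon (I : Set R) * (J.annihilator * I) + I.colon (J : Set R) * (I.annihilator * J) :=
      add_le_add (mul_mono_right inf_le_right) (mul_mono_right inf_le_left)
    _ = ⊥ := by
      rw [colon_mul_annihilator_mul_eq_bot, colon_mul_annihilator_mul_eq_bot, add_eq_sup,
        sup_bot_eq]

theorem annihilator_le_total (h2 : ∀ I J : Ideal R, J.colon I + I.colon J = ⊤) {M : Ideal R}
    (hM0 : M ≠ ⊥) (hM : ∀ N : Ideal R, N ≠ ⊥ → M ≤ N) (I J : Ideal R) :
    I.annihilator ≤ J.annihilator ∨ J.annihilator ≤ I.annihilator := by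
  by_contra! h
  obtain ⟨hIJ, hJI⟩ := h
  rw [le_annihilator_iff_mul_eq_bot] at hIJ hJI
  apply hM0
  rw [eq_bot_iff, ← annihilator_mul_inf_annihilator_mul_eq_bot h2 I J]
  exact le_inf (hM _ hIJ) (hM _ hJI)

theorem eq_mul_colon_of_le (h1 : ∀ I J : Ideal R, I ⊓ J = I * J.colon I) {I J : Ideal R}
    (h : J ≤ I) : J = I * J.colon (I : Set R) := by
  rw [← h1, inf_eq_right.mpr h]

theorem eq_or_eq_mul_of_mul_le_of_le (h1 : ∀ I J : Ideal R, I ⊓ J = I * J.colon I)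
    {T P X : Ideal R} (hT : T.IsMaximal) (hPX : P * T ≤ X) (hXP : X ≤ P) :
    X = P ∨ X = P * T := by
  have hTX : T ≤ X.colon (P : Set R) := le_colon_iff_mul_le_s14.mpr (by rwa [mul_comm])
  have hX := eq_mul_colon_of_le h1 hXP
  rcases eq_or_ne (X.colon (P : Set R)) ⊤ with htop | hne
  · left
    rw [hX, htop, mul_top]
  · right
    rw [hX, ← hT.eq_of_le hne hTX]

theorem colon_iInf_pow_le (h1 : ∀ I J : Ideal R, I ⊓ J = I * J.colon I) {T : Ideal R}
    (hT : T.IsMaximal) (hstrict : ∀ n, T ^ (n + 1) ≠ T ^ n) (n : ℕ) :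
    (⨅ k, T ^ k).colon (T : Set R) ≤ T ^ n := by
  induction n with
  | zero => simp
  | succ n ih =>
    intro x hx
    have hxT : span {x} * T ≤ ⨅ k, T ^ k :=
      le_colon_iff_mul_le_s14.mp ((span_singleton_le_iff_mem _).mpr hx)
    rcases eq_or_eq_mul_of_mul_le_of_le h1 hT (X := T ^ (n + 1) ⊔ span {x}) (P := T ^ n)
      (le_sup_of_le_left (pow_succ T n).le)
      (sup_le (pow_le_pow_right n.le_succ) ((span_singleton_le_iff_mem _).mpr (ih hx)))
      with h | h
    · refine absurd (le_antisymm (pow_le_pow_right (n + 1).le_succ) ?_) (hstrict (n + 1))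
      calc T ^ (n + 1) = T ^ n * T := pow_succ T n
        _ = T ^ (n + 2) ⊔ span {x} * T := by rw [← h, sup_mul, ← pow_succ]
        _ ≤ T ^ (n + 2) := sup_le le_rfl (hxT.trans (iInf_le _ _))
    · rw [← pow_succ] at h
      exact h ▸ le_sup_right (a := T ^ (n + 1)) (mem_span_singleton_self x)

theorem mul_iInf_pow_eq (h1 : ∀ I J : Ideal R, I ⊓ J = I * J.colon I) {T : Ideal R}
    (hT : T.IsMaximal) (hstrict : ∀ n, T ^ (n + 1) ≠ T ^ n) :
    T * ⨅ n, T ^ n = ⨅ n, T ^ n := by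
  refine le_antisymm mul_le_right ?_
  calc ⨅ n, T ^ n = T * (⨅ n, T ^ n).colon (T : Set R) :=
        eq_mul_colon_of_le h1 (iInf_le_of_le 1 (pow_one T).le)
    _ ≤ T * ⨅ n, T ^ n := mul_mono_right (le_iInf (colon_iInf_pow_le h1 hT hstrict))

theorem annihilator_mul_ne_self (h1 : ∀ I J : Ideal R, I ⊓ J = I * J.colon I) {M : Ideal R}
    (hM0 : M ≠ ⊥) (hM : ∀ N : Ideal R, N ≠ ⊥ → M ≤ N) {Q : Ideal R} (hQ : Q ≠ ⊥) :
    M.annihilator * Q ≠ Q := by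
  intro hTQ
  have hMQ := eq_mul_colon_of_le h1 (hM Q hQ)
  apply hM0
  calc M = Q * M.colon (Q : Set R) := hMQ
    _ = M.annihilator * (Q * M.colon (Q : Set R)) := by rw [← mul_assoc, hTQ]
    _ = ⊥ := by rw [← hMQ, annihilator_mul]

theorem exists_pow_annihilator_eq_bot (h1 : ∀ I J : Ideal R, I ⊓ J = I * J.colon I)
    {M : Ideal R} (hM0 : M ≠ ⊥) (hM : ∀ N : Ideal R, N ≠ ⊥ → M ≤ N) :
    ∃ n, M.annihilator ^ n = ⊥ := by
  by_contra! hT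
  have hstrict (n : ℕ) : M.annihilator ^ (n + 1) ≠ M.annihilator ^ n := by
    rw [pow_succ']
    exact annihilator_mul_ne_self h1 hM0 hM (hT n)
  have hatom : IsAtom M := ⟨hM0, fun N hN => by_contra fun h => hN.not_ge (hM N h)⟩
  have hQ : ⨅ n, M.annihilator ^ n ≠ ⊥ :=
    ne_bot_of_le_ne_bot hM0 (le_iInf fun n => hM _ (hT n))
  exact annihilator_mul_ne_self h1 hM0 hM hQ
    (mul_iInf_pow_eq h1 (isMaximal_annihilator_of_isAtom hatom) hstrict)

theorem exists_annihilator_eq_pow_of_pow_le (h1 : ∀ I J : Ideal R, I ⊓ J = I * J.colon I)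
    {M : Ideal R} (hM : ∀ N : Ideal R, N ≠ ⊥ → M ≤ N) (n : ℕ) :
    ∀ {I : Ideal R}, M.annihilator ^ n ≤ I.annihilator →
      ∃ j ≤ n, I.annihilator = M.annihilator ^ j := by
  induction n with
  | zero =>
    intro I hI
    exact ⟨0, le_rfl, le_antisymm (by simp) hI⟩
  | succ n ih =>
    intro I hI
    rcases eq_or_ne I ⊥ with rfl | hI0
    · exact ⟨0, (n + 1).zero_le, by simp [annihilator_bot]⟩
    have hTI : M.annihilator ^ n ≤ (M.annihilator * I).annihilator := by
      rw [le_annihilator_iff_mul_eq_bot, ← mul_assoc, ← pow_succ]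
      exact le_annihilator_iff_mul_eq_bot.mp hI
    obtain ⟨j, hj, hJ⟩ := ih hTI
    refine ⟨j + 1, by omega, ?_⟩
    rw [eq_mul_colon_of_le h1 (annihilator_mono (hM I hI0)), annihilator_colon, hJ, pow_succ']

theorem setOf_eq_annihilator_finite (h1 : ∀ I J : Ideal R, I ⊓ J = I * J.colon I)
    {M : Ideal R} (hM0 : M ≠ ⊥) (hM : ∀ N : Ideal R, N ≠ ⊥ → M ≤ N) :
    {I : Ideal R | ∃ J : Ideal R, I = J.annihilator}.Finite := by
  obtain ⟨n, hn⟩ := exists_pow_annihilator_eq_bot h1 hM0 hM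
  refine ((Set.finite_Iic n).image (M.annihilator ^ ·)).subset ?_
  rintro _ ⟨I, rfl⟩
  obtain ⟨j, hj, hI⟩ := exists_annihilator_eq_pow_of_pow_le h1 hM n (hn ▸ bot_le)
  exact ⟨j, hj, hI.symm⟩

end Ideal

/-- In a subdirectly irreducible BL-ring, the annihilator ideals are linearly
ordered by inclusion and finite in number. (`I → J = J.colon I`; `I*` is the
annihilator of `I`; subdirectly irreducible means there is a smallest nonzero ideal.) -/
theorem stmt_14 {R : Type*} [CommRing R]
    (h1 : ∀ I J : Ideal R, I ⊓ J = I * (J.colon I))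
    (h2 : ∀ I J : Ideal R, J.colon I + I.colon J = ⊤)
    (hsi : ∃ M : Ideal R, M ≠ ⊥ ∧ ∀ N : Ideal R, N ≠ ⊥ → M ≤ N) :
    (∀ I J : Ideal R, (∃ I' : Ideal R, I = I'.annihilator) →
      (∃ J' : Ideal R, J = J'.annihilator) → I ≤ J ∨ J ≤ I) ∧
      {I : Ideal R | ∃ J : Ideal R, I = J.annihilator}.Finite := by
  obtain ⟨M, hM0, hM⟩ := hsi
  refine ⟨?_, Ideal.setOf_eq_annihilator_finite h1 hM0 hM⟩
  rintro _ _ ⟨I, rfl⟩ ⟨J, rfl⟩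
  exact Ideal.annihilator_le_total h2 hM0 hM I J
end

section
/- Let R be a subdirectly irreducible BL-ring. Then every ideal of R is either an annihilator ideal (I = J* for some ideal J) or a dense ideal (I* = 0). -/
/-!
Let `M` be the smallest nonzero ideal. Anything outside `M*` is a non-zero-divisor, since
`e * x = 0` with `x ≠ 0` gives `e M ⊆ e (x) = 0`. The crux is that `M*` is nil: for a
non-nilpotent `w ∈ M*`, BLR-1 applied to the `w`-power torsion ideal `Q ⊇ M` and BLR-2 applied
to `(w)` and `(w^n)*` yield an `e ∉ M*` with `e w^(n+1) = 0`. Hence every dense ideal contains a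
unit. Finally, for `y ∈ I**` the two axioms give `(y) ∩ (I : y)* = 0`, so by minimality of `M`
the ideal `I : y` is dense, hence all of `R`, and `y ∈ I`. So every ideal is `(I*)*`.
-/

section

open Ideal
open Submodule (mem_annihilator mem_annihilator_span_singleton mem_colon)

variable {R : Type*} [CommRing R]

theorem mem_torsion'_powers_iff {w x : R} :
    x ∈ Submodule.torsion' R R (Submonoid.powers w) ↔ ∃ n : ℕ, w ^ n * x = 0 := by
  simp [Submonoid.mem_powers_iff]

theorem le_annihilator_comm {I J : Ideal R} : I ≤ J.annihilator ↔ J ≤ I.annihilator := by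
  simp only [Submodule.le_annihilator_iff, smul_eq_mul, mul_comm]

theorem exists_mul_eq_of_mem_span_singleton_inf
    (h1 : ∀ I J : Ideal R, I ⊓ J = I * (J.colon I)) {a x : R} {J : Ideal R}
    (hx : x ∈ span {a} ⊓ J) : ∃ c, c * a ∈ J ∧ a * c = x := by
  rw [h1] at hx
  obtain ⟨c, hc, hac⟩ := mem_span_singleton_mul.mp hx
  exact ⟨c, Ideal.mem_colon_span_singleton.mp hc, hac⟩

theorem exists_mem_colon_add_mem_colon_eq_one
    (h2 : ∀ I J : Ideal R, J.colon I + I.colon J = ⊤) (I J : Ideal R) :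
    ∃ e ∈ J.colon I, ∃ f ∈ I.colon J, e + f = 1 :=
  add_eq_one_iff.mp ((h2 I J).trans one_eq_top.symm)

theorem mem_annihilator_of_mul_eq_zero {M : Ideal R} (hmin : ∀ N : Ideal R, N ≠ ⊥ → M ≤ N)
    {e x : R} (hx : x ≠ 0) (hex : e * x = 0) : e ∈ M.annihilator := by
  refine mem_annihilator.mpr fun m hm => ?_
  obtain ⟨a, rfl⟩ := mem_span_singleton'.mp (hmin _ (by simpa using hx) hm)
  rw [smul_eq_mul, ← mul_assoc, mul_right_comm, hex, zero_mul]

theorem isNilpotent_of_mem_annihilator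
    (h1 : ∀ I J : Ideal R, I ⊓ J = I * (J.colon I))
    (h2 : ∀ I J : Ideal R, J.colon I + I.colon J = ⊤)
    {M : Ideal R} (hM : M ≠ ⊥) (hmin : ∀ N : Ideal R, N ≠ ⊥ → M ≤ N)
    {w : R} (hw : w ∈ M.annihilator) : IsNilpotent w := by
  by_contra hnil
  set Q := Submodule.torsion' R R (Submonoid.powers w)
  have hMQ : M ≤ Q := fun m hm =>
    mem_torsion'_powers_iff.mpr ⟨1, by simpa [mul_comm] using mem_annihilator.mp hw m hm⟩
  obtain ⟨q, hq, t, ht, hqt⟩ : ∃ q ∈ Q, ∃ t ∈ M.colon Q, q * t ≠ 0 := by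
    by_contra! h
    apply hM
    rw [← inf_eq_right.mpr hMQ, h1, eq_bot_iff]
    exact mul_le.mpr fun q hq t ht => (Submodule.mem_bot R).mpr (h q hq t ht)
  obtain ⟨n, hn⟩ := mem_torsion'_powers_iff.mp hq
  obtain ⟨e, he, f, hf, hef⟩ :=
    exists_mem_colon_add_mem_colon_eq_one h2 (span {w}) (span {w ^ n}).annihilator
  have hqf : q * f ∈ span {w} ⊓ (span {w ^ n}).annihilator := by
    have hqC : q ∈ (span {w ^ n}).annihilator := by
      rw [mem_annihilator_span_singleton, smul_eq_mul, mul_comm, hn]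
    refine ⟨?_, Ideal.mul_mem_right f _ hqC⟩
    simpa [mul_comm] using mem_colon.mp hf q hqC
  obtain ⟨c, hc, hwc⟩ := exists_mul_eq_of_mem_span_singleton_inf h1 hqf
  have hcQ : c ∈ Q := by
    rw [mem_annihilator_span_singleton, smul_eq_mul] at hc
    exact mem_torsion'_powers_iff.mpr ⟨n + 1, by rw [pow_succ]; linear_combination hc⟩
  have htc : t * c ∈ M := by simpa using mem_colon.mp ht c hcQ
  have hqtf : f * (q * t) = 0 := by
    have := mem_annihilator.mp hw _ htc
    rw [smul_eq_mul] at this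
    linear_combination -t * hwc + this
  have hfM : f ∈ M.annihilator := mem_annihilator_of_mul_eq_zero hmin hqt hqtf
  have heM : e ∉ M.annihilator := fun heM => hM <| Submodule.annihilator_eq_top_iff.mp <|
    (eq_top_iff_one _).mpr (hef ▸ add_mem heM hfM)
  have hew : e * w ^ (n + 1) = 0 := by
    rw [Ideal.mem_colon_span_singleton, mem_annihilator_span_singleton, smul_eq_mul] at he
    rw [pow_succ]
    linear_combination he
  exact hnil ⟨n + 1, by_contra fun h0 => heM (mem_annihilator_of_mul_eq_zero hmin h0 hew)⟩

theorem eq_top_of_annihilator_eq_bot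
    (h1 : ∀ I J : Ideal R, I ⊓ J = I * (J.colon I))
    (h2 : ∀ I J : Ideal R, J.colon I + I.colon J = ⊤)
    {M : Ideal R} (hM : M ≠ ⊥) (hmin : ∀ N : Ideal R, N ≠ ⊥ → M ≤ N)
    {D : Ideal R} (hD : D.annihilator = ⊥) : D = ⊤ := by
  obtain ⟨d, hdD, hdM⟩ := Set.not_subset.mp fun hle : D ≤ M.annihilator =>
    hM (eq_bot_iff.mpr (hD ▸ le_annihilator_comm.mp hle))
  obtain ⟨z, hzM, hdz⟩ : ∃ z ∈ M, d * z ≠ 0 := by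
    by_contra! h
    exact hdM (mem_annihilator.mpr h)
  obtain ⟨a, ha⟩ := mem_span_singleton'.mp (hmin _ (by simpa using hdz) hzM)
  have hnil : IsNilpotent (1 - a * d) :=
    isNilpotent_of_mem_annihilator h1 h2 hM hmin <|
      mem_annihilator_of_mul_eq_zero hmin (right_ne_zero_of_mul hdz)
        (by linear_combination -ha)
  exact eq_top_of_isUnit_mem _ (D.mul_mem_left a hdD) (by simpa using hnil.isUnit_one_sub)

theorem span_singleton_inf_annihilator_colon_eq_bot
    (h1 : ∀ I J : Ideal R, I ⊓ J = I * (J.colon I))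
    (h2 : ∀ I J : Ideal R, J.colon I + I.colon J = ⊤)
    {I : Ideal R} {y : R} (hy : y ∈ I.annihilator.annihilator) :
    span {y} ⊓ (I.colon (span {y})).annihilator = ⊥ := by
  obtain ⟨u, hu, v, hv, huv⟩ := exists_mem_colon_add_mem_colon_eq_one h2 (span {y}) I
  rw [eq_bot_iff]
  rintro _ ⟨hxy, hxD⟩
  obtain ⟨t, rfl⟩ := mem_span_singleton'.mp hxy
  have hxu : t * y * u = 0 := mem_annihilator.mp hxD u hu
  have htv : t * v ∈ I.annihilator := by
    refine mem_annihilator.mpr fun i hi => ?_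
    have hvi : v * i ∈ span {y} ⊓ I := ⟨mem_colon.mp hv i hi, I.mul_mem_left v hi⟩
    obtain ⟨d, hdy, hyd⟩ := exists_mul_eq_of_mem_span_singleton_inf h1 hvi
    have hxd : t * y * d = 0 :=
      mem_annihilator.mp hxD d (Ideal.mem_colon_span_singleton.mpr hdy)
    rw [smul_eq_mul]
    linear_combination hxd - t * hyd
  have hxv : y * (t * v) = 0 := mem_annihilator.mp hy _ htv
  rw [mem_bot]
  linear_combination hxu + hxv - t * y * huv

theorem annihilator_annihilator_le
    (h1 : ∀ I J : Ideal R, I ⊓ J = I * (J.colon I))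
    (h2 : ∀ I J : Ideal R, J.colon I + I.colon J = ⊤)
    {M : Ideal R} (hM : M ≠ ⊥) (hmin : ∀ N : Ideal R, N ≠ ⊥ → M ≤ N) (I : Ideal R) :
    I.annihilator.annihilator ≤ I := by
  intro y hy
  by_cases hy0 : y = 0
  · exact hy0 ▸ I.zero_mem
  have hD : (I.colon (span {y})).annihilator = ⊥ := by
    by_contra hD
    exact hM <| eq_bot_iff.mpr <| (span_singleton_inf_annihilator_colon_eq_bot h1 h2 hy) ▸
      le_inf (hmin _ (by simpa using hy0)) (hmin _ hD)
  have hDtop := eq_top_of_annihilator_eq_bot h1 h2 hM hmin hD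
  exact (Submodule.colon_eq_top_iff_subset _).mp hDtop (mem_span_singleton_self y)

end

/-- In a subdirectly irreducible BL-ring, every ideal is either an annihilator
ideal (`I = J*` for some ideal `J`) or a dense ideal (`I* = 0`). -/
theorem stmt_15 {R : Type*} [CommRing R]
    (h1 : ∀ I J : Ideal R, I ⊓ J = I * (J.colon I))
    (h2 : ∀ I J : Ideal R, J.colon I + I.colon J = ⊤)
    (hsi : ∃ M : Ideal R, M ≠ ⊥ ∧ ∀ N : Ideal R, N ≠ ⊥ → M ≤ N) :
    ∀ I : Ideal R, (∃ J : Ideal R, I = J.annihilator) ∨ I.annihilator = ⊥ := by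
  obtain ⟨M, hM, hmin⟩ := hsi
  exact fun I => Or.inl ⟨I.annihilator,
    le_antisymm (le_annihilator_comm.mp le_rfl) (annihilator_annihilator_le h1 h2 hM hmin I)⟩
end

section
/- Let R be a subdirectly irreducible BL-ring. Then for all ideals I, J of R, either I→J is dense or J→I is dense (i.e., (I→J)* = 0 or (J→I)* = 0). -/
/-- In a subdirectly irreducible BL-ring, for all ideals `I, J`, either `I → J`
or `J → I` is dense (has zero annihilator). Here `I → J = J.colon I`. -/
theorem stmt_16 {R : Type*} [CommRing R]
    (h1 : ∀ I J : Ideal R, I ⊓ J = I * (J.colon I))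
    (h2 : ∀ I J : Ideal R, J.colon I + I.colon J = ⊤)
    (hsi : ∃ M : Ideal R, M ≠ ⊥ ∧ ∀ N : Ideal R, N ≠ ⊥ → M ≤ N) :
    ∀ I J : Ideal R, (J.colon I).annihilator = ⊥ ∨ (I.colon J).annihilator = ⊥ := by
  intro I J
  by_contra hc
  push_neg at hc
  obtain ⟨hA, hB⟩ := hc
  obtain ⟨M, hM, hMmin⟩ := hsi
  have hMA := hMmin _ hA
  have hMB := hMmin _ hB
  apply hM
  ext x
  simp only [Ideal.mem_bot]
  constructor
  · intro hx
    have hxA : x ∈ (J.colon I).annihilator := hMA hx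
    have hxB : x ∈ (I.colon J).annihilator := hMB hx
    rw [Submodule.mem_annihilator] at hxA hxB
    have h1' : (1 : R) ∈ J.colon I + I.colon J := by rw [h2 I J]; trivial
    obtain ⟨a, ha, b, hb, hab⟩ := Submodule.mem_sup.mp h1'
    have : x * 1 = 0 := by
      rw [← hab, mul_add]
      have := hxA a ha
      have h2' := hxB b hb
      simp only [smul_eq_mul] at this h2'
      rw [this, h2', add_zero]
    simpa using this
  · rintro rfl; exact zero_mem _
end

section
/- Let R be a BL-ring, I an ideal of R, and P a prime ideal of R. Then either I ⊆ P or I→P = P. -/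
/-- In a BL-ring, for every ideal `I` and prime ideal `P`, either `I ⊆ P` or
`I → P = P` (with `I → P = P.colon I`). -/
theorem stmt_17 {R : Type*} [CommRing R]
    (h1 : ∀ I J : Ideal R, I ⊓ J = I * (J.colon I))
    (h2 : ∀ I J : Ideal R, J.colon I + I.colon J = ⊤)
    (I P : Ideal R) (hP : P.IsPrime) :
    I ≤ P ∨ P.colon I = P := by
  by_cases hIP : I ≤ P
  · exact Or.inl hIP
  · right
    have hmul : I * (P.colon I) ≤ P := by
      rw [← h1 I P]; exact inf_le_right
    have := (hP.mul_le.mp hmul).resolve_left hIP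
    refine le_antisymm this ?_
    intro x hx
    rw [Submodule.mem_colon]
    intro p hp
    exact P.mul_mem_right p hx
end

section
/- Let R be a BL-ring and let P, Q be prime ideals of R that are not comparable (P ⊄ Q and Q ⊄ P, i.e., neither P ⊆ Q nor Q ⊆ P). Then P and Q are comaximal: P + Q = R. In particular, distinct minimal prime ideals of a BL-ring are comaximal. -/
lemma colon_le_of_prime {R : Type*} [CommRing R] {P Q : Ideal R}
    (hQ : Q.IsPrime) (h : ¬P ≤ Q) : Q.colon P ≤ Q := by
  obtain ⟨p, hpP, hpQ⟩ := Set.not_subset.mp h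
  intro x hx
  have hxp : x • p ∈ Q := Submodule.mem_colon.mp hx p hpP
  rcases hQ.mem_or_mem (by simpa [smul_eq_mul] using hxp) with hx' | hp'
  · exact hx'
  · exact absurd hp' hpQ

/-- In a BL-ring, incomparable prime ideals are comaximal; in particular,
distinct minimal prime ideals are comaximal. -/
theorem stmt_18 {R : Type*} [CommRing R]
    (h1 : ∀ I J : Ideal R, I ⊓ J = I * (J.colon I))
    (h2 : ∀ I J : Ideal R, J.colon I + I.colon J = ⊤) :
    (∀ P Q : Ideal R, P.IsPrime → Q.IsPrime → ¬P ≤ Q → ¬Q ≤ P → P + Q = ⊤) ∧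
      (∀ P Q : Ideal R, P ∈ minimalPrimes R → Q ∈ minimalPrimes R → P ≠ Q →
        P + Q = ⊤) := by
  have main : ∀ P Q : Ideal R, P.IsPrime → Q.IsPrime → ¬P ≤ Q → ¬Q ≤ P → P + Q = ⊤ := by
    intro P Q hP hQ hPQ hQP
    have h3 : Q.colon P ≤ Q := colon_le_of_prime hQ hPQ
    have h4 : P.colon Q ≤ P := colon_le_of_prime hP hQP
    refine le_antisymm le_top ?_
    rw [← h2 P Q]
    exact sup_le (h3.trans le_sup_right) (h4.trans le_sup_left)
  refine ⟨main, fun P Q hPm hQm hne => ?_⟩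
  have hP := hPm.1.1
  have hQ := hQm.1.1
  have hPQ : ¬P ≤ Q := fun h => hne (le_antisymm h (hQm.2 ⟨hP, bot_le⟩ h))
  have hQP : ¬Q ≤ P := fun h => hne ((le_antisymm h (hPm.2 ⟨hQ, bot_le⟩ h)).symm)
  exact main P Q hP hQ hPQ hQP
end

section
/- Let R be a BL-ring that is a local ring. Then the prime ideals of R form a chain under inclusion, and every proper ideal of R is a power of a prime ideal of R. -/
/-!
By BLR-2, in a local ring one of the two colon ideals `J : I` and `I : J` must be the whole ring,
so the ideals of `R` are totally ordered; by BLR-1, whenever `J ≤ I` we have `J = I (J : I)`.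
Consequently the radical `P` of a proper ideal `I` is prime, and a prime `P` is absorbed by every
ideal not contained in it: `C P = P`. Either `P² = P`, and then Nakayama forces `P = 0`, or `P` is
principal, generated by any `a ∈ P \ P²`; in both cases `P ^ n ≤ I` for some `n`. If `I` lies in
every power of `P` this gives `I = P ^ n`. Otherwise choose `j ≥ 1` with `I ≤ P ^ j` but
`I ≰ P ^ (j + 1)`: then `I = P ^ j C` with `C ≰ P`, and absorption gives `I = P ^ j`.
-/

namespace IsLocalRing

variable {R : Type*} [CommRing R] [IsLocalRing R]

theorem eq_top_or_eq_top_of_add_eq_top {I J : Ideal R} (h : I + J = ⊤) : I = ⊤ ∨ J = ⊤ := by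
  by_contra! hne
  apply (maximalIdeal.isMaximal R).ne_top
  rw [eq_top_iff, ← h]
  exact sup_le (le_maximalIdeal hne.1) (le_maximalIdeal hne.2)

theorem le_or_le_of_colon_add_colon_eq_top {I J : Ideal R} (h : J.colon I + I.colon J = ⊤) :
    I ≤ J ∨ J ≤ I := by
  simpa [Submodule.colon_eq_top_iff_subset] using eq_top_or_eq_top_of_add_eq_top h

end IsLocalRing

namespace Ideal

variable {R : Type*} [CommRing R]

theorem IsPrime.mul_eq_self_of_eq_mul {P C D : Ideal R} (hP : P.IsPrime) (hPCD : P = C * D)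
    (hC : ¬C ≤ P) : C * P = P := by
  have hD : D ≤ P := (hP.mul_le.mp hPCD.ge).resolve_left hC
  exact le_antisymm mul_le_right (hPCD.le.trans (mul_mono_right hD))

theorem isPrime_radical_of_total (hchain : ∀ I J : Ideal R, I ≤ J ∨ J ≤ I) {I : Ideal R}
    (hI : I ≠ ⊤) : I.radical.IsPrime := by
  rw [radical_eq_sInf]
  obtain ⟨M, hM, hIM⟩ := exists_le_maximal I hI
  exact sInf_isPrime_of_isChain ⟨M, hIM, hM.isPrime⟩ (fun J _ K _ _ ↦ hchain J K)
    fun J hJ ↦ hJ.2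

theorem mul_eq_self_of_not_le (hchain : ∀ I J : Ideal R, I ≤ J ∨ J ≤ I)
    (hmul : ∀ {I J : Ideal R}, J ≤ I → J = I * J.colon I) {P C : Ideal R} (hP : P.IsPrime)
    (hC : ¬C ≤ P) : C * P = P :=
  hP.mul_eq_self_of_eq_mul (hmul ((hchain P C).resolve_right hC)) hC

theorem eq_bot_of_mul_self_eq_self [IsLocalRing R]
    (hmul : ∀ {I J : Ideal R}, J ≤ I → J = I * J.colon I) {E : Ideal R} (hE : E ≠ ⊤)
    (hEE : E * E = E) : E = ⊥ := by
  rw [eq_bot_iff]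
  intro s hs
  have hspan : span {s} ≤ E := (span_singleton_le_iff_mem _).mpr hs
  have hfix : span {s} = E * span {s} := by
    rw [hmul hspan, ← mul_assoc, hEE]
  have hbot : span {s} = ⊥ :=
    Submodule.eq_bot_of_le_smul_of_le_jacobson_bot E _ (Submodule.fg_span_singleton s) hfix.le
      ((IsLocalRing.le_maximalIdeal hE).trans (IsLocalRing.maximalIdeal_le_jacobson ⊥))
  rw [mem_bot, ← span_singleton_eq_bot]
  exact hbot

theorem eq_span_singleton_of_mem_of_notMem_mul_self (hchain : ∀ I J : Ideal R, I ≤ J ∨ J ≤ I)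
    (hmul : ∀ {I J : Ideal R}, J ≤ I → J = I * J.colon I) {P : Ideal R} (hP : P.IsPrime)
    {a : R} (ha : a ∈ P) (ha' : a ∉ P * P) : P = span {a} := by
  have hspan : span {a} ≤ P := (span_singleton_le_iff_mem _).mpr ha
  have hcolon : ¬(span {a}).colon P ≤ P := fun h ↦
    ha' ((hmul hspan).le.trans (mul_mono_right h) (mem_span_singleton_self a))
  calc P = (span {a}).colon P * P := (mul_eq_self_of_not_le hchain hmul hP hcolon).symm
    _ = span {a} := by rw [mul_comm, ← hmul hspan]

theorem exists_radical_pow_le [IsLocalRing R] (hchain : ∀ I J : Ideal R, I ≤ J ∨ J ≤ I)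
    (hmul : ∀ {I J : Ideal R}, J ≤ I → J = I * J.colon I) {I : Ideal R} (hI : I ≠ ⊤) :
    ∃ n, I.radical ^ n ≤ I := by
  have hP := isPrime_radical_of_total hchain hI
  by_cases hsq : I.radical * I.radical = I.radical
  · refine ⟨1, ?_⟩
    rw [pow_one, eq_bot_of_mul_self_eq_self hmul hP.ne_top hsq]
    exact bot_le
  · obtain ⟨a, haP, ha⟩ := SetLike.exists_of_lt (lt_of_le_of_ne mul_le_left hsq)
    obtain ⟨n, hn⟩ := mem_radical_iff.mp haP
    refine ⟨n, ?_⟩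
    rwa [eq_span_singleton_of_mem_of_notMem_mul_self hchain hmul hP haP ha, span_singleton_pow,
      span_singleton_le_iff_mem]

theorem eq_pow_of_le_pow_of_not_le_pow_succ (hchain : ∀ I J : Ideal R, I ≤ J ∨ J ≤ I)
    (hmul : ∀ {I J : Ideal R}, J ≤ I → J = I * J.colon I) {P I : Ideal R} (hP : P.IsPrime)
    {j : ℕ} (hj : j ≠ 0) (hle : I ≤ P ^ j) (hnle : ¬I ≤ P ^ (j + 1)) : I = P ^ j := by
  have hI : I = P ^ j * I.colon (P ^ j : Ideal R) := hmul hle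
  have hC : ¬I.colon (P ^ j : Ideal R) ≤ P := fun h ↦
    hnle (hI.le.trans (by rw [pow_succ]; exact mul_mono_right h))
  generalize I.colon (P ^ j : Ideal R) = C at hI hC
  obtain ⟨i, rfl⟩ := Nat.exists_eq_succ_of_ne_zero hj
  calc I = P ^ i * (C * P) := by rw [hI, pow_succ]; ring
    _ = P ^ (i + 1) := by rw [mul_eq_self_of_not_le hchain hmul hP hC, pow_succ]

theorem exists_eq_pow_of_not_forall_le_pow (hchain : ∀ I J : Ideal R, I ≤ J ∨ J ≤ I)
    (hmul : ∀ {I J : Ideal R}, J ≤ I → J = I * J.colon I) {P I : Ideal R} (hP : P.IsPrime)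
    (hIP : I ≤ P) (h : ¬∀ m, I ≤ P ^ m) : ∃ j, I = P ^ j := by
  push Not at h
  obtain ⟨_ | k, hm⟩ := h
  · simp at hm
  obtain ⟨j, hj, hj'⟩ := Nat.exists_not_and_succ_of_not_zero_of_exists
    (p := fun n ↦ ¬I ≤ P ^ (n + 1)) (by simpa using hIP) ⟨k, hm⟩
  exact ⟨j + 1, eq_pow_of_le_pow_of_not_le_pow_succ hchain hmul hP j.succ_ne_zero
    (not_not.mp hj) hj'⟩

end Ideal

/-- In a local BL-ring, the prime ideals form a chain under inclusion and every
proper ideal is a power of a prime ideal. -/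
theorem stmt_19 {R : Type*} [CommRing R] [IsLocalRing R]
    (h1 : ∀ I J : Ideal R, I ⊓ J = I * (J.colon I))
    (h2 : ∀ I J : Ideal R, J.colon I + I.colon J = ⊤) :
    (∀ P Q : Ideal R, P.IsPrime → Q.IsPrime → P ≤ Q ∨ Q ≤ P) ∧
      (∀ I : Ideal R, I ≠ ⊤ → ∃ (P : Ideal R) (n : ℕ), P.IsPrime ∧ I = P ^ n) := by
  have hchain (I J : Ideal R) : I ≤ J ∨ J ≤ I :=
    IsLocalRing.le_or_le_of_colon_add_colon_eq_top (h2 I J)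
  have hmul {I J : Ideal R} (h : J ≤ I) : J = I * J.colon I := by
    rw [← h1, inf_eq_right.mpr h]
  refine ⟨fun P Q _ _ ↦ hchain P Q, fun I hI ↦ ?_⟩
  have hP := Ideal.isPrime_radical_of_total hchain hI
  by_cases hall : ∀ m, I ≤ I.radical ^ m
  · obtain ⟨n, hn⟩ := Ideal.exists_radical_pow_le hchain hmul hI
    exact ⟨I.radical, n, hP, (hall n).antisymm hn⟩
  · obtain ⟨j, hj⟩ :=
      Ideal.exists_eq_pow_of_not_forall_le_pow hchain hmul hP Ideal.le_radical hall
    exact ⟨I.radical, j, hP, hj⟩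
end
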